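/- Let θ ∈ ℝ_{>0} and a ∈ ℝ, and consider the equation θx / tanh(θx) = x² + a for x ∈ (0, ∞). If a ≤ 0, this equation has exactly one solution in (0, ∞). If a > 0, it has at most two solutions in (0, ∞). -/

import Mathlib

/-!
By the Mittag-Leffler expansion of the cotangent, taken at imaginary arguments,
`t coth t = 1 + ∑ 2 t² / (t² + π² n²)`, and every summand is a strictly concave function of
`s = t²`. Substituting `s = (θ x / π)²`, the equation says that a strictly concave function
of `s` meets an affine one, which can happen at most twice. If `a ≤ 0`, the concave side
already lies above the affine one at `s = 0` (where it equals `1`), so it can cross it at most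
once; a crossing exists by the intermediate value theorem because `t coth t ≤ 1 + t` grows
slower than `x²`.
-/

noncomputable section

open Real Set

theorem Real.continuous_tanh : Continuous tanh := by
  have : tanh = fun t => sinh t / cosh t := funext tanh_eq_sinh_div_cosh
  rw [this]
  exact continuous_sinh.div continuous_cosh fun t => (cosh_pos t).ne'

theorem Real.tanh_pos {t : ℝ} (ht : 0 < t) : 0 < tanh t := by
  rw [tanh_eq_sinh_div_cosh]
  exact div_pos (sinh_pos_iff.mpr ht) (cosh_pos t)

theorem Real.div_tanh_le_one_add {t : ℝ} (ht : 0 < t) : t / tanh t ≤ 1 + t := by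
  have hsinh : 0 < sinh t := sinh_pos_iff.mpr ht
  have hexp : cosh t - sinh t ≤ 1 := by
    rw [cosh_sub_sinh]
    exact exp_le_one_iff.mpr (neg_nonpos.mpr ht.le)
  rw [tanh_eq_sinh_div_cosh, div_div_eq_mul_div, div_le_iff₀ hsinh]
  nlinarith [self_le_sinh_iff.mpr ht.le]

theorem StrictConcaveOn.tsum {ι E : Type*} [Nonempty ι] [AddCommMonoid E] [Module ℝ E]
    {s : Set E} {f : ι → E → ℝ} (hf : ∀ i, StrictConcaveOn ℝ s (f i))
    (hsum : ∀ x ∈ s, Summable fun i => f i x) :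
    StrictConcaveOn ℝ s fun x => ∑' i, f i x := by
  obtain ⟨i₀⟩ : Nonempty ι := inferInstance
  refine ⟨(hf i₀).1, fun x hx y hy hxy a b ha hb hab => ?_⟩
  have hcomb : a • x + b • y ∈ s := (hf i₀).1 hx hy ha.le hb.le hab
  simp only [smul_eq_mul]
  rw [← (hsum x hx).tsum_mul_left, ← (hsum y hy).tsum_mul_left,
    ← ((hsum x hx).mul_left a).tsum_add ((hsum y hy).mul_left b)]
  exact ((hsum x hx).mul_left a |>.add ((hsum y hy).mul_left b)).tsum_lt_tsum
    (fun i => ((hf i).2 hx hy hxy ha hb hab).le) ((hf i₀).2 hx hy hxy ha hb hab) (hsum _ hcomb)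

theorem StrictConcaveOn.mul_add_lt_of_lt_of_lt {f : ℝ → ℝ} {s : Set ℝ}
    (hf : StrictConcaveOn ℝ s f) (c d : ℝ) {x y z : ℝ} (hx : x ∈ s) (hz : z ∈ s)
    (hxy : x < y) (hyz : y < z)
    (hfx : c * x + d ≤ f x) (hfz : c * z + d ≤ f z) : c * y + d < f y := by
  have hxz : z - x ≠ 0 := by linarith
  set p := (z - y) / (z - x)
  set q := (y - x) / (z - x)
  have hp : 0 < p := div_pos (by linarith) (by linarith)
  have hq : 0 < q := div_pos (by linarith) (by linarith)
  have hy : p • x + q • z = y := by simp only [p, q, smul_eq_mul]; field_simp; ring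
  have hpq : p + q = 1 := by simp only [p, q]; field_simp; ring
  have hlt := hf.2 hx hz (hxy.trans hyz).ne hp hq hpq
  rw [hy, smul_eq_mul, smul_eq_mul] at hlt
  calc c * y + d = p * (c * x + d) + q * (c * z + d) := by
        simp only [p, q]; field_simp; ring
    _ ≤ p * f x + q * f z := by gcongr
    _ < f y := hlt

theorem strictConcaveOn_mul_div_add {b c : ℝ} (hb : 0 < b) (hc : 0 < c) :
    StrictConcaveOn ℝ (Ioi (-c)) fun s => b * s / (s + c) := by
  refine ⟨convex_Ioi _, fun x hx y hy hxy p q hp hq hpq => ?_⟩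
  simp only [mem_Ioi, smul_eq_mul] at *
  have hx' : 0 < x + c := by linarith
  have hy' : 0 < y + c := by linarith
  have hm : p * x + q * y + c = p * (x + c) + q * (y + c) := by linear_combination c * hpq.symm
  have hm' : 0 < p * x + q * y + c := by rw [hm]; positivity
  have key : b * (p * x + q * y) / (p * x + q * y + c)
        - (p * (b * x / (x + c)) + q * (b * y / (y + c)))
      = b * c * p * q * (x - y) ^ 2 / ((x + c) * (y + c) * (p * x + q * y + c)) := by
    obtain rfl : q = 1 - p := by linarith
    field_simp
    ring
  have : 0 < b * c * p * q * (x - y) ^ 2 / ((x + c) * (y + c) * (p * x + q * y + c)) := by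
    have := sub_ne_zero.mpr hxy
    positivity
  linarith

theorem exists_eq_or_eq_of_not_lt_lt {α : Type*} [LinearOrder α] [Nonempty α] {p : α → Prop}
    (h : ∀ x y z, p x → p y → p z → x < y → y < z → False) :
    ∃ a b, ∀ x, p x → x = a ∨ x = b := by
  by_contra! hne
  obtain ⟨x, hx, -⟩ := hne (Classical.arbitrary α) (Classical.arbitrary α)
  obtain ⟨y, hy, hyx, -⟩ := hne x x
  obtain ⟨z, hz, hzx, hzy⟩ := hne x y
  rcases hyx.lt_or_gt with hxy | hxy <;> rcases hzx.lt_or_gt with hxz | hxz <;>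
    rcases hzy.lt_or_gt with hyz | hyz <;> grind

theorem one_div_mul_I_sub_add_one_div_mul_I_add (y : ℝ) {m : ℝ} (hm : 0 < m) :
    1 / (y * Complex.I - m) + 1 / (y * Complex.I + m) =
      -Complex.I * ((2 * y / (y ^ 2 + m ^ 2) : ℝ) : ℂ) := by
  have hd : (y : ℂ) ^ 2 + m ^ 2 ≠ 0 := by
    exact_mod_cast (by positivity : 0 < y ^ 2 + m ^ 2).ne'
  have hprod : (y * Complex.I - m) * (y * Complex.I + m) = -(y ^ 2 + m ^ 2) := by
    linear_combination y ^ 2 * Complex.I_sq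
  have h1 : (y * Complex.I - m : ℂ) ≠ 0 := left_ne_zero_of_mul (hprod ▸ neg_ne_zero.mpr hd)
  have h2 : (y * Complex.I + m : ℂ) ≠ 0 := right_ne_zero_of_mul (hprod ▸ neg_ne_zero.mpr hd)
  rw [div_add_div _ _ h1 h2, hprod]
  push_cast
  field_simp
  ring

theorem Real.pi_div_tanh_sub_one_div {y : ℝ} (hy : y ≠ 0) :
    π / tanh (π * y) - 1 / y = ∑' n : ℕ, 2 * y / (y ^ 2 + (n + 1) ^ 2) := by
  have hyZ : (y * Complex.I : ℂ) ∈ Complex.integerComplement := by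
    rintro ⟨n, hn⟩
    exact hy (by simpa using (congrArg Complex.im hn).symm)
  have hterm (n : ℕ) : 1 / (y * Complex.I - (n + 1)) + 1 / (y * Complex.I + (n + 1)) =
      -Complex.I * ((2 * y / (y ^ 2 + (n + 1) ^ 2) : ℝ) : ℂ) := by
    exact_mod_cast one_div_mul_I_sub_add_one_div_mul_I_add y (m := n + 1) (by positivity)
  have h := cot_series_rep' hyZ
  simp_rw [hterm, tsum_mul_left, ← Complex.ofReal_tsum] at h
  apply Complex.ofReal_injective
  apply mul_left_cancel₀ (neg_ne_zero.mpr Complex.I_ne_zero)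
  rw [← h, ← mul_assoc, Complex.cot, ← Complex.ofReal_mul, Complex.cos_mul_I,
    Complex.sin_mul_I, tanh_eq_sinh_div_cosh]
  push_cast
  field_simp
  rw [Complex.I_sq]
  ring

def cothSeries (s : ℝ) : ℝ := 1 + ∑' n : ℕ, 2 * s / (s + (n + 1) ^ 2)

theorem Real.pi_mul_div_tanh_eq_cothSeries {y : ℝ} (hy : y ≠ 0) :
    π * y / tanh (π * y) = cothSeries (y ^ 2) := by
  have h := congrArg (y * ·) (pi_div_tanh_sub_one_div hy)
  simp only [← tsum_mul_left] at h
  rw [cothSeries, ← sub_eq_iff_eq_add', mul_div_right_comm]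
  convert h using 1
  · field_simp
  · congr 1 with n
    ring

theorem Real.div_tanh_eq_cothSeries {t : ℝ} (ht : t ≠ 0) :
    t / tanh t = cothSeries ((t / π) ^ 2) := by
  have h := pi_mul_div_tanh_eq_cothSeries (div_ne_zero ht pi_ne_zero)
  rwa [mul_div_cancel₀ t pi_ne_zero] at h

theorem cothSeries_zero : cothSeries 0 = 1 := by simp [cothSeries]

theorem summable_cothSeries_term {s : ℝ} (hs : 0 ≤ s) :
    Summable fun n : ℕ => 2 * s / (s + (n + 1) ^ 2) := by
  have hinv : Summable fun n : ℕ => 1 / ((n : ℝ) + 1) ^ 2 := by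
    exact_mod_cast (summable_nat_add_iff 1).mpr (Real.summable_one_div_nat_pow.mpr one_lt_two)
  refine (hinv.mul_left (2 * s)).of_nonneg_of_le (fun n => by positivity) fun n => ?_
  rw [mul_one_div]
  exact div_le_div_of_nonneg_left (by positivity) (by positivity) (le_add_of_nonneg_left hs)

theorem strictConcaveOn_cothSeries : StrictConcaveOn ℝ (Ici 0) cothSeries := by
  have hterm (n : ℕ) : StrictConcaveOn ℝ (Ici 0) fun s : ℝ => 2 * s / (s + (n + 1) ^ 2) :=
    (strictConcaveOn_mul_div_add two_pos (by positivity)).subset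
      (Ici_subset_Ioi.mpr (neg_neg_of_pos (by positivity))) (convex_Ici 0)
  exact (concaveOn_const 1 (convex_Ici 0)).add_strictConcaveOn
    (StrictConcaveOn.tsum hterm fun s hs => summable_cothSeries_term hs)

theorem one_le_cothSeries {s : ℝ} (hs : 0 ≤ s) : 1 ≤ cothSeries s :=
  le_add_of_nonneg_right (tsum_nonneg fun n => by positivity)

theorem Real.one_le_div_tanh {t : ℝ} (ht : t ≠ 0) : 1 ≤ t / tanh t := by
  rw [div_tanh_eq_cothSeries ht]
  exact one_le_cothSeries (sq_nonneg _)

theorem cothSeries_eq_of_div_tanh_eq {θ a x : ℝ} (hθ : θ ≠ 0) (hx : x ≠ 0)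
    (h : θ * x / tanh (θ * x) = x ^ 2 + a) :
    (π / θ) ^ 2 * (θ * x / π) ^ 2 + a = cothSeries ((θ * x / π) ^ 2) := by
  rw [← div_tanh_eq_cothSeries (mul_ne_zero hθ hx), h]
  field_simp

theorem sq_mul_div_pi_lt {θ x y : ℝ} (hθ : θ ≠ 0) (hx : 0 < x) (hxy : x < y) :
    (θ * x / π) ^ 2 < (θ * y / π) ^ 2 := by
  rw [mul_div_right_comm, mul_div_right_comm θ, mul_pow, mul_pow]
  have : 0 < (θ / π) ^ 2 := by positivity
  gcongr

theorem eq_of_div_tanh_eq_of_nonpos {θ a x y : ℝ} (hθ : θ ≠ 0) (ha : a ≤ 0) (hx : 0 < x)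
    (hy : 0 < y) (hxe : θ * x / tanh (θ * x) = x ^ 2 + a)
    (hye : θ * y / tanh (θ * y) = y ^ 2 + a) : x = y := by
  wlog hxy : x < y generalizing x y
  · rcases (not_lt.mp hxy).eq_or_lt with h | h
    · exact h.symm
    · exact (this hy hx hye hxe h).symm
  have hlt := strictConcaveOn_cothSeries.mul_add_lt_of_lt_of_lt ((π / θ) ^ 2) a (x := 0)
    self_mem_Ici (mem_Ici.mpr (sq_nonneg _)) (by positivity) (sq_mul_div_pi_lt hθ hx hxy)
    (by rw [cothSeries_zero]; linarith) (cothSeries_eq_of_div_tanh_eq hθ hy.ne' hye).le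
  exact absurd (cothSeries_eq_of_div_tanh_eq hθ hx.ne' hxe) hlt.ne

theorem not_div_tanh_eq_of_lt_of_lt {θ a x y z : ℝ} (hθ : θ ≠ 0) (hx : 0 < x) (hxy : x < y)
    (hyz : y < z) (hxe : θ * x / tanh (θ * x) = x ^ 2 + a)
    (hye : θ * y / tanh (θ * y) = y ^ 2 + a) (hze : θ * z / tanh (θ * z) = z ^ 2 + a) :
    False := by
  have hy : 0 < y := hx.trans hxy
  have hlt := strictConcaveOn_cothSeries.mul_add_lt_of_lt_of_lt ((π / θ) ^ 2) a
    (mem_Ici.mpr (sq_nonneg _)) (mem_Ici.mpr (sq_nonneg _)) (sq_mul_div_pi_lt hθ hx hxy)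
    (sq_mul_div_pi_lt hθ hy hyz) (cothSeries_eq_of_div_tanh_eq hθ hx.ne' hxe).le
    (cothSeries_eq_of_div_tanh_eq hθ (hy.trans hyz).ne' hze).le
  exact hlt.ne (cothSeries_eq_of_div_tanh_eq hθ hy.ne' hye)

theorem exists_div_tanh_eq {θ a : ℝ} (hθ : 0 < θ) (ha : a ≤ 0) :
    ∃ x, 0 < x ∧ θ * x / tanh (θ * x) = x ^ 2 + a := by
  set f : ℝ → ℝ := fun x => θ * x / tanh (θ * x) - x ^ 2 - a
  set x₁ := θ + 2 - a
  have hx₁ : 1 / 2 ≤ x₁ := by linarith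
  have hcont : ContinuousOn f (Icc (1 / 2) x₁) := by
    refine ContinuousOn.sub (ContinuousOn.sub ?_ (by fun_prop)) continuousOn_const
    exact ContinuousOn.div (by fun_prop) (continuous_tanh.comp_continuousOn (by fun_prop))
      fun x hx => (tanh_pos (mul_pos hθ (lt_of_lt_of_le (by norm_num) hx.1))).ne'
  have hf₀ : 0 ≤ f (1 / 2) := by
    have := one_le_div_tanh (mul_ne_zero hθ.ne' (one_div_ne_zero two_ne_zero))
    simp only [f]
    linarith
  have hf₁ : f x₁ ≤ 0 := by
    have := div_tanh_le_one_add (mul_pos hθ (by linarith : 0 < x₁))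
    simp only [f]
    nlinarith
  obtain ⟨x, hx, hfx⟩ := intermediate_value_Icc' hx₁ hcont ⟨hf₁, hf₀⟩
  exact ⟨x, lt_of_lt_of_le (by norm_num) hx.1, by simp only [f] at hfx; linarith⟩

/-- **Lemma.** Fix `θ > 0` and `a ∈ ℝ`, and consider the equation
`θ x / tanh(θ x) = x² + a` for `x ∈ (0, ∞)`.
If `a ≤ 0`, it has exactly one solution in `(0, ∞)`;
if `a > 0`, it has at most two solutions in `(0, ∞)`. -/
theorem tanh_equation_solutions (θ a : ℝ) (hθ : 0 < θ) :
    (a ≤ 0 → ∃! x : ℝ, 0 < x ∧ θ * x / Real.tanh (θ * x) = x ^ 2 + a) ∧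
    (0 < a → ∃ x₁ x₂ : ℝ, ∀ x : ℝ, 0 < x →
      θ * x / Real.tanh (θ * x) = x ^ 2 + a → x = x₁ ∨ x = x₂) := by
  refine ⟨fun ha => ?_, fun _ => ?_⟩
  · obtain ⟨x, hx, hxe⟩ := exists_div_tanh_eq hθ ha
    exact ⟨x, ⟨hx, hxe⟩, fun y ⟨hy, hye⟩ =>
      eq_of_div_tanh_eq_of_nonpos hθ.ne' ha hy hx hye hxe⟩
  · obtain ⟨x₁, x₂, h⟩ := exists_eq_or_eq_of_not_lt_lt
      (p := fun x : ℝ => 0 < x ∧ θ * x / tanh (θ * x) = x ^ 2 + a)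
      fun x y z ⟨hx, hxe⟩ ⟨_, hye⟩ ⟨_, hze⟩ hxy hyz =>
        not_div_tanh_eq_of_lt_of_lt hθ.ne' hx hxy hyz hxe hye hze
    exact ⟨x₁, x₂, fun x hx hxe => h x ⟨hx, hxe⟩⟩
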